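/- Let n ≥ 2, let x_1 ≤ ⋯ ≤ x_n be real numbers with Σ_{i=1}^{n} x_i = 0, and set σ_μ² := (1/n) Σ_{i=1}^{n} x_i². Let z_1 ≤ ⋯ ≤ z_{n−1} be real numbers with Φ(z_i) = i/n for i = 1, …, n−1, and set l := Σ_{i=1}^{n−1} (x_{i+1} − x_i) φ(z_i). Denote by W(σ) := ∫_{−∞}^{z_1} (x_1 − σ z)² φ(z) dz + Σ_{i=2}^{n−1} ∫_{z_{i−1}}^{z_i} (x_i − σ z)² φ(z) dz + ∫_{z_{n−1}}^{∞} (x_n − σ z)² φ(z) dz the squared quadratic transport cost from the empirical distribution to the centered Gaussian of standard deviation σ. Then the infimum of W(σ) over σ ∈ [0, ∞) equals σ_μ² − l², and it is attained at σ = l. -/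

import Mathlib

open MeasureTheory

/-- The standard normal density `φ(z) = (2π)^{-1/2} exp(-z²/2)`. -/
noncomputable def stdGaussianPDF (z : ℝ) : ℝ :=
  (Real.sqrt (2 * Real.pi))⁻¹ * Real.exp (-z ^ 2 / 2)

/-- The standard normal cumulative distribution function `Φ(t) = ∫_{-∞}^t φ(z) dz`. -/
noncomputable def stdGaussianCDF (t : ℝ) : ℝ :=
  ∫ z in Set.Iic t, stdGaussianPDF z

/-
Since `(c - σt)² = c² + σ² - 2cσt + σ²(t² - 1)` and `φ' = -tφ`, the function `(c - σt)²φ(t)`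
differs from `(c² + σ²)φ(t)` by the derivative of `σ(2c - σt)φ(t)`, a function vanishing at `±∞`.
Hence every piece of `W(σ)` is explicit in `Φ` and `φ` at the quantiles `z_i`. Summing by parts,
the `σ²`-terms collapse to `σ²`, the `σ`-terms to `-2σl` and, as each piece carries mass `1/n`,
the constant terms to `σ_μ²`. So `W(σ) = σ_μ² - 2lσ + σ² = (σ - l)² + σ_μ² - l²`, and `l ≥ 0`
because the `x_i` are sorted.
-/

open Set

local notation "φ" => stdGaussianPDF
local notation "Φ" => stdGaussianCDF

lemma stdGaussianPDF_eq (t : ℝ) : φ t = (√(2 * Real.pi))⁻¹ * Real.exp (-2⁻¹ * t ^ 2) := by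
  rw [stdGaussianPDF]; ring_nf

lemma stdGaussianPDF_nonneg (t : ℝ) : 0 ≤ φ t := by
  rw [stdGaussianPDF_eq]; positivity

lemma hasDerivAt_stdGaussianPDF (t : ℝ) : HasDerivAt φ (-t * φ t) t := by
  have h := (((hasDerivAt_pow 2 t).const_mul (-2⁻¹ : ℝ)).exp).const_mul (√(2 * Real.pi))⁻¹
  rw [show φ = fun s => (√(2 * Real.pi))⁻¹ * Real.exp (-2⁻¹ * s ^ 2) from
    funext stdGaussianPDF_eq]
  exact h.congr_deriv (by push_cast; ring)

lemma integral_stdGaussianPDF : ∫ t, φ t = 1 := by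
  simp_rw [stdGaussianPDF_eq]
  rw [integral_const_mul, integral_gaussian, show Real.pi / 2⁻¹ = 2 * Real.pi by ring]
  exact inv_mul_cancel₀ (by positivity)

lemma integrable_pow_mul_stdGaussianPDF (k : ℕ) : Integrable fun t : ℝ => t ^ k * φ t := by
  have h := (integrable_rpow_mul_exp_neg_mul_sq (b := 2⁻¹) (by norm_num)
    (s := k) (by linarith [k.cast_nonneg (α := ℝ)])).const_mul (√(2 * Real.pi))⁻¹
  refine h.congr (ae_of_all _ fun t => ?_)
  simp only [Real.rpow_natCast, stdGaussianPDF_eq]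
  ring

lemma integrable_quadratic_mul_stdGaussianPDF (a b c : ℝ) :
    Integrable fun t : ℝ => (a + b * t + c * t ^ 2) * φ t := by
  have h := (((integrable_pow_mul_stdGaussianPDF 0).const_mul a).add
    ((integrable_pow_mul_stdGaussianPDF 1).const_mul b)).add
    ((integrable_pow_mul_stdGaussianPDF 2).const_mul c)
  exact h.congr (ae_of_all _ fun t => by simp only [Pi.add_apply]; ring)

lemma hasDerivAt_sq_sub_mul_stdGaussianPDF_primitive (c σ t : ℝ) :
    HasDerivAt (fun s => σ * (2 * c - σ * s) * φ s)
      ((c - σ * t) ^ 2 * φ t - (c ^ 2 + σ ^ 2) * φ t) t := by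
  have h := (((hasDerivAt_id t).const_mul σ).const_sub (2 * c)).const_mul σ
    |>.mul (hasDerivAt_stdGaussianPDF t)
  exact h.congr_deriv (by simp only [id]; ring)

lemma integrable_stdGaussianPDF : Integrable φ := by
  simpa using integrable_pow_mul_stdGaussianPDF 0

lemma integrable_sq_sub_mul_stdGaussianPDF (c σ : ℝ) :
    Integrable fun t : ℝ => (c - σ * t) ^ 2 * φ t :=
  (integrable_quadratic_mul_stdGaussianPDF (c ^ 2) (-2 * c * σ) (σ ^ 2)).congr
    (ae_of_all _ fun t => by ring)

lemma integrable_sq_sub_mul_stdGaussianPDF_primitive (c σ : ℝ) :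
    Integrable fun t : ℝ => σ * (2 * c - σ * t) * φ t :=
  (integrable_quadratic_mul_stdGaussianPDF (2 * c * σ) (-σ ^ 2) 0).congr
    (ae_of_all _ fun t => by ring)

lemma integral_sq_sub_mul_stdGaussianPDF (c σ : ℝ) :
    ∫ t, (c - σ * t) ^ 2 * φ t = c ^ 2 + σ ^ 2 := by
  have hprim := integral_eq_zero_of_hasDerivAt_of_integrable
    (hasDerivAt_sq_sub_mul_stdGaussianPDF_primitive c σ)
    ((integrable_sq_sub_mul_stdGaussianPDF c σ).sub (integrable_stdGaussianPDF.const_mul _))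
    (integrable_sq_sub_mul_stdGaussianPDF_primitive c σ)
  rw [integral_sub (integrable_sq_sub_mul_stdGaussianPDF c σ)
    (integrable_stdGaussianPDF.const_mul _), integral_const_mul, integral_stdGaussianPDF] at hprim
  linarith

lemma integral_Iic_sq_sub_mul_stdGaussianPDF (c σ a : ℝ) :
    ∫ t in Iic a, (c - σ * t) ^ 2 * φ t = (c ^ 2 + σ ^ 2) * Φ a + σ * (2 * c - σ * a) * φ a := by
  have hderiv := hasDerivAt_sq_sub_mul_stdGaussianPDF_primitive c σ
  have hint := (integrable_sq_sub_mul_stdGaussianPDF c σ).sub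
    (integrable_stdGaussianPDF.const_mul (c ^ 2 + σ ^ 2))
  have hprim := integral_Iic_of_hasDerivAt_of_tendsto' (a := a) (fun t _ => hderiv t)
    hint.integrableOn (tendsto_zero_of_hasDerivAt_of_integrableOn_Iic (a := 0) (fun t _ => hderiv t)
      hint.integrableOn (integrable_sq_sub_mul_stdGaussianPDF_primitive c σ).integrableOn)
  rw [integral_sub (integrable_sq_sub_mul_stdGaussianPDF c σ).integrableOn
    (integrable_stdGaussianPDF.const_mul _).integrableOn, integral_const_mul] at hprim
  rw [stdGaussianCDF]
  linarith

section SummationByParts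

variable {α M : Type*} [AddCommGroup M]

theorem sum_Icc_increments_eq_sum_Icc_jumps (F : ℕ → α → M) (z : ℕ → α) {m : ℕ} (hm : 1 ≤ m) :
    F 1 (z 1) + ∑ i ∈ Finset.Icc 2 m, (F i (z i) - F i (z (i - 1)))
      = ∑ i ∈ Finset.Icc 1 m, (F i (z i) - F (i + 1) (z i)) + F (m + 1) (z m) := by
  induction m, hm using Nat.le_induction with
  | base => simp
  | succ m hm ih =>
    rw [Finset.sum_Icc_succ_top (by omega), Finset.sum_Icc_succ_top (by omega), ← add_assoc, ih,
      Nat.add_sub_cancel]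
    abel

end SummationByParts

theorem sum_Icc_natCast_mul_sub_add {R : Type*} [CommRing R] (a : ℕ → R) (m : ℕ) :
    ∑ i ∈ Finset.Icc 1 m, (i : R) * (a i - a (i + 1)) + (m + 1) * a (m + 1)
      = ∑ i ∈ Finset.Icc 1 (m + 1), a i := by
  induction m with
  | zero => simp
  | succ m ih =>
    rw [Finset.sum_Icc_succ_top (by omega), Finset.sum_Icc_succ_top (by omega), ← ih]
    push_cast
    ring

lemma piecewise_gaussian_cost_eq (x z : ℕ → ℝ) (σ : ℝ) {m : ℕ} (hm : 1 ≤ m) :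
    (∫ t in Iic (z 1), (x 1 - σ * t) ^ 2 * φ t)
        + (∑ i ∈ Finset.Icc 2 m, ∫ t in (z (i - 1))..(z i), (x i - σ * t) ^ 2 * φ t)
        + (∫ t in Ici (z m), (x (m + 1) - σ * t) ^ 2 * φ t)
      = (∑ i ∈ Finset.Icc 1 m, (x i ^ 2 - x (i + 1) ^ 2) * Φ (z i) + x (m + 1) ^ 2)
        - 2 * σ * ∑ i ∈ Finset.Icc 1 m, (x (i + 1) - x i) * φ (z i) + σ ^ 2 := by
  set F : ℕ → ℝ → ℝ := fun i a => ∫ t in Iic a, (x i - σ * t) ^ 2 * φ t with hF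
  have hint (i : ℕ) := integrable_sq_sub_mul_stdGaussianPDF (x i) σ
  have hpiece (i : ℕ) :
      ∫ t in (z (i - 1))..(z i), (x i - σ * t) ^ 2 * φ t = F i (z i) - F i (z (i - 1)) :=
    (intervalIntegral.integral_Iic_sub_Iic (hint i).integrableOn (hint i).integrableOn).symm
  have htail : ∫ t in Ici (z m), (x (m + 1) - σ * t) ^ 2 * φ t
      = x (m + 1) ^ 2 + σ ^ 2 - F (m + 1) (z m) := by
    rw [← integral_sq_sub_mul_stdGaussianPDF, ← intervalIntegral.integral_Iic_add_Ioi
      (hint _).integrableOn (hint _).integrableOn, integral_Ici_eq_integral_Ioi]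
    ring
  have hjump (i : ℕ) : F i (z i) - F (i + 1) (z i)
      = (x i ^ 2 - x (i + 1) ^ 2) * Φ (z i) - 2 * σ * ((x (i + 1) - x i) * φ (z i)) := by
    simp only [hF, integral_Iic_sq_sub_mul_stdGaussianPDF]
    ring
  have hparts := sum_Icc_increments_eq_sum_Icc_jumps F z hm
  rw [Finset.sum_congr rfl fun i _ => hjump i] at hparts
  rw [Finset.sum_congr rfl fun i _ => hpiece i, htail, Finset.mul_sum]
  simp only [Finset.sum_sub_distrib] at hparts ⊢
  linear_combination hparts

theorem min_squared_transport_cost_to_gaussian_ray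
    (n : ℕ) (hn : 2 ≤ n) (x : ℕ → ℝ)
    (hxmono : ∀ i, 1 ≤ i → i < n → x i ≤ x (i + 1))
    (σμsq : ℝ) (hσμsq : σμsq = (1 / (n : ℝ)) * ∑ i ∈ Finset.Icc 1 n, (x i) ^ 2)
    (z : ℕ → ℝ)
    (hz : ∀ i, 1 ≤ i → i ≤ n - 1 → stdGaussianCDF (z i) = (i : ℝ) / n)
    (l : ℝ) (hl : l = ∑ i ∈ Finset.Icc 1 (n - 1), (x (i + 1) - x i) * stdGaussianPDF (z i))
    (W : ℝ → ℝ)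
    (hW : ∀ σ : ℝ, W σ =
      (∫ t in Set.Iic (z 1), (x 1 - σ * t) ^ 2 * stdGaussianPDF t)
        + (∑ i ∈ Finset.Icc 2 (n - 1),
            ∫ t in (z (i - 1))..(z i), (x i - σ * t) ^ 2 * stdGaussianPDF t)
        + (∫ t in Set.Ici (z (n - 1)), (x n - σ * t) ^ 2 * stdGaussianPDF t)) :
    IsLeast (W '' Set.Ici (0 : ℝ)) (σμsq - l ^ 2)
      ∧ l ∈ Set.Ici (0 : ℝ) ∧ W l = σμsq - l ^ 2 := by
  obtain ⟨m, rfl⟩ : ∃ m, n = m + 1 := ⟨n - 1, by omega⟩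
  simp only [Nat.add_sub_cancel] at hz hl hW
  have hcost (σ : ℝ) : W σ = σμsq - 2 * l * σ + σ ^ 2 := by
    have hquantile : ∀ i ∈ Finset.Icc 1 m, (x i ^ 2 - x (i + 1) ^ 2) * Φ (z i)
        = 1 / (m + 1 : ℝ) * (i * (x i ^ 2 - x (i + 1) ^ 2)) := fun i hi => by
      rw [hz i (Finset.mem_Icc.1 hi).1 (Finset.mem_Icc.1 hi).2]
      push_cast
      ring
    rw [hW, piecewise_gaussian_cost_eq x z σ (by omega), ← hl, Finset.sum_congr rfl hquantile,
      ← Finset.mul_sum, hσμsq, ← sum_Icc_natCast_mul_sub_add]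
    push_cast
    field_simp
  have hl_nonneg : 0 ≤ l := hl ▸ Finset.sum_nonneg fun i hi => by
    obtain ⟨hi₁, hi₂⟩ := Finset.mem_Icc.1 hi
    exact mul_nonneg (sub_nonneg.2 (hxmono i hi₁ (Nat.lt_succ_of_le hi₂))) (stdGaussianPDF_nonneg _)
  refine ⟨⟨⟨l, hl_nonneg, by rw [hcost]; ring⟩, ?_⟩, hl_nonneg, by rw [hcost]; ring⟩
  rintro _ ⟨σ, -, rfl⟩
  rw [hcost]
  nlinarith [sq_nonneg (σ - l)]
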